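/- arXiv:1108.1784 — 2 statements merged into one kernel-verified Lean document; each statement's English description precedes it below -/
import Mathlib

section
/- Let G be a finite group containing an involution t with C_G(t) = ⟨t⟩. Then G has a normal abelian subgroup A of odd order with index 2 in G, and conjugation by t maps each element of A to its inverse. -/
/-!
A Sylow 2-subgroup `P` containing `t` has a nontrivial centre, which lies in `C_G(t) = ⟨t⟩`; so `t`
is central in `P` and `P = ⟨t⟩`. Being cyclic for the smallest prime, `P` has a normal complement
`A` by Burnside's transfer theorem, of odd order and index `2`. As `A ∩ C_G(t) = A ∩ P = 1`,
conjugation by `t` is a fixed-point-free involutive automorphism of the finite group `A`, and such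
an automorphism is inversion, which forces `A` to be abelian.
-/

open Subgroup

section

variable {G : Type*} [Group G]

theorem IsPGroup.le_zpowers_of_centralizer_eq_zpowers [Finite G] {p : ℕ} [hp : Fact p.Prime]
    {P : Subgroup G} (hP : IsPGroup p P) {t : G} (htP : t ∈ P) (ht : orderOf t = p)
    (hc : centralizer {t} = zpowers t) : P ≤ zpowers t := by
  have ht1 : t ≠ 1 := by
    rintro rfl
    rw [orderOf_one] at ht
    exact hp.out.ne_one ht.symm
  have : Nontrivial P := nontrivial_of_ne ⟨t, htP⟩ 1 (by simpa [Subtype.ext_iff] using ht1)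
  have := hP.center_nontrivial
  obtain ⟨⟨z, hz⟩, hz1⟩ := exists_ne (1 : center P)
  have hz1 : (z : G) ≠ 1 := fun h ↦ hz1 (Subtype.ext (Subtype.ext h))
  have hcomm (q : P) : (q : G) * z = z * q := congrArg Subtype.val (mem_center_iff.1 hz q)
  have hzt : (z : G) ∈ zpowers t := hc ▸ mem_centralizer_singleton_iff.2 (hcomm ⟨t, htP⟩).symm
  have hzp : orderOf (z : G) = p := by
    have hdvd : orderOf (z : G) ∣ p := ht ▸ Nat.card_zpowers t ▸ (zpowers t).orderOf_dvd_natCard hzt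
    exact (hp.out.eq_one_or_self_of_dvd _ hdvd).resolve_left (orderOf_eq_one_iff.not.2 hz1)
  have hzpowers : zpowers (z : G) = zpowers t :=
    eq_of_le_of_card_ge (zpowers_le.2 hzt) (by rw [Nat.card_zpowers, Nat.card_zpowers, ht, hzp])
  intro q hq
  have hzq : zpowers (z : G) ≤ centralizer {q} :=
    zpowers_le.2 (mem_centralizer_singleton_iff.2 (hcomm ⟨q, hq⟩).symm)
  rw [← hc]
  exact mem_centralizer_singleton_iff.2
    (mem_centralizer_singleton_iff.1 (hzq (hzpowers ▸ mem_zpowers t))).symm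

theorem Sylow.exists_coe_eq_zpowers_of_centralizer_eq_zpowers [Finite G] {p : ℕ} [Fact p.Prime]
    {t : G} (ht : orderOf t = p) (hc : centralizer {t} = zpowers t) :
    ∃ P : Sylow p G, (P : Subgroup G) = zpowers t := by
  have hpgroup : IsPGroup p (zpowers t) := .of_card (n := 1) (by rw [Nat.card_zpowers, ht, pow_one])
  obtain ⟨P, hle⟩ := hpgroup.exists_le_sylow
  exact ⟨P, le_antisymm (P.2.le_zpowers_of_centralizer_eq_zpowers (hle (mem_zpowers t)) ht hc) hle⟩

section ConjNormal

variable {A : Subgroup G} [A.Normal] {t : G}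

theorem fixedPointFree_conjNormal (hA : Disjoint A (centralizer {t})) :
    MonoidHom.FixedPointFree (MulAut.conjNormal t : MulAut A) := by
  intro a ha
  have hfix : t * a * t⁻¹ = a := by rw [← MulAut.conjNormal_apply, ha]
  exact Subtype.ext (hA.le_bot ⟨a.2, mem_centralizer_singleton_iff.2
    (mul_inv_eq_iff_eq_mul.1 hfix).symm⟩)

theorem involutive_conjNormal (ht : t ^ 2 = 1) :
    Function.Involutive (MulAut.conjNormal t : MulAut A) := by
  intro a
  ext
  calc t * (t * a * t⁻¹) * t⁻¹
      = t ^ 2 * a * (t ^ 2)⁻¹ := by simp only [sq, mul_inv_rev, mul_assoc]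
    _ = a := by rw [ht, one_mul, inv_one, mul_one]

variable [Finite A]

theorem conj_eq_inv_of_disjoint_centralizer (ht : t ^ 2 = 1) (hA : Disjoint A (centralizer {t}))
    {a : G} (ha : a ∈ A) : t * a * t⁻¹ = a⁻¹ := by
  have h := congrFun ((fixedPointFree_conjNormal hA).coe_eq_inv_of_involutive
    (involutive_conjNormal ht)) ⟨a, ha⟩
  simpa using congrArg Subtype.val h

theorem commute_of_disjoint_centralizer (ht : t ^ 2 = 1) (hA : Disjoint A (centralizer {t}))
    (a b : A) : Commute a b :=
  (fixedPointFree_conjNormal hA).commute_all_of_involutive (involutive_conjNormal ht) a b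

end ConjNormal

end

theorem structure_of_self_centralizing_involution (G : Type*) [Group G] [Fintype G]
    (t : G) (ht : orderOf t = 2)
    (hc : Subgroup.centralizer {t} = Subgroup.zpowers t) :
    ∃ A : Subgroup G, A.Normal ∧ (∀ a b : A, a * b = b * a) ∧
      Odd (Nat.card A) ∧ A.index = 2 ∧ ∀ a ∈ A, t * a * t⁻¹ = a⁻¹ := by
  obtain ⟨P, hP⟩ := Sylow.exists_coe_eq_zpowers_of_centralizer_eq_zpowers ht hc
  have hcyclic : IsCyclic P := hP ▸ isCyclic_zpowers t
  have hG : (Nat.card G).minFac = 2 := (Nat.minFac_eq_two_iff _).2 (ht ▸ orderOf_dvd_natCard t)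
  set A := (MonoidHom.transferSylow P (hcyclic.normalizer_le_centralizer hG)).ker
  have hAP : A.IsComplement' P := hcyclic.isComplement' hG
  have hdisj : Disjoint A (centralizer {t}) := hc ▸ hP ▸ hAP.disjoint
  have ht2 : t ^ 2 = 1 := ht ▸ pow_orderOf_eq_one t
  refine ⟨A, MonoidHom.normal_ker _, commute_of_disjoint_centralizer ht2 hdisj, ?_, ?_,
    fun a ha ↦ conj_eq_inv_of_disjoint_centralizer ht2 hdisj ha⟩
  · rw [← hAP.index_eq_card, Nat.odd_iff, ← Nat.two_dvd_ne_zero]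
    exact P.not_dvd_index
  · rw [hAP.symm.index_eq_card, hP, Nat.card_zpowers, ht]
end

section
/- For all n ∈ ℕ and k ≥ 2, κ(S_n) ≤ s_k(n)² + Σ_{ℓ=k}^{n} κ(S_{n-ℓ})/ℓ², where s_k(n) is the probability that a uniformly random permutation of {1,...,n} has all cycles of length less than k, and κ(S_m) is the probability that two independent uniformly random elements of S_m are conjugate (κ(S_0)=1). -/
noncomputable def kappa (G : Type*) [Group G] : ℝ :=
  (Nat.card {p : G × G // IsConj p.1 p.2} : ℝ) / (Nat.card G : ℝ) ^ 2

/-- `κ(S_m)`, the probability that two independently uniformly random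
permutations of an `m`-set are conjugate. -/
noncomputable def kappaS (m : ℕ) : ℝ := kappa (Equiv.Perm (Fin m))

/-- The probability that a uniformly random permutation of an `n`-set has all
cycles of length strictly less than `k`. -/
noncomputable def shortCycleProb (k n : ℕ) : ℝ :=
  (Nat.card {σ : Equiv.Perm (Fin n) // ∀ x, Function.minimalPeriod (⇑σ) x < k} : ℝ) /
    Nat.factorial n

/-!
Conjugacy classes of `S_n` are the cycle types, so `(n!)² κ(S_n) = ∑_M c_n(M)²`, where `c_n(M)`
is the number of permutations of cycle type `M`. Conjugate pairs all of whose cycles are shorter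
than `k` lie in a square of size `(n! s_k(n))²`. Every other conjugate pair shares a cycle length
`ℓ ∈ [k, n]`; by the class-size formula `ℓ c_n(M) ≤ n!/(n - ℓ)! · c_{n-ℓ}(M - {ℓ})`, and
`M ↦ M - {ℓ}` is injective on types containing `ℓ`, so there are at most `(n!/ℓ)² κ(S_{n-ℓ})`
conjugate pairs sharing the cycle length `ℓ`.
-/

open Equiv Finset Function Nat

theorem Multiset.prod_factorial_count_dvd_of_le {M N : Multiset ℕ} (h : M ≤ N) :
    ∏ a ∈ M.toFinset, (M.count a)! ∣ ∏ a ∈ N.toFinset, (N.count a)! :=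
  (prod_dvd_prod_of_dvd _ _ fun a _ => factorial_dvd_factorial (Multiset.count_le_of_le a h)).trans
    (prod_dvd_prod_of_subset _ _ _ (Multiset.toFinset_subset.2 (Multiset.subset_of_le h)))

theorem Finset.sum_sq_card_fiber {ι κ : Type*} [Fintype ι] [DecidableEq κ] (f : ι → κ)
    (s : Finset κ) :
    ∑ b ∈ s, #{x | f x = b} ^ 2 = #{p : ι × ι | f p.1 = f p.2 ∧ f p.1 ∈ s} := by
  rw [card_eq_sum_card_fiberwise (f := fun p : ι × ι => f p.1) (t := s)
    fun p hp => (mem_filter.1 hp).2.2]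
  refine sum_congr rfl fun b hb => ?_
  rw [sq, ← card_product]
  congr 1
  ext ⟨x, y⟩
  simp only [mem_product, mem_filter, mem_univ, true_and]
  constructor
  · rintro ⟨rfl, hy⟩; exact ⟨⟨hy.symm, hb⟩, rfl⟩
  · rintro ⟨⟨hxy, -⟩, rfl⟩; exact ⟨rfl, hxy.symm⟩

namespace Equiv.Perm

variable {α β : Type*} [Fintype α] [DecidableEq α] [Fintype β] [DecidableEq β]

theorem minimalPeriod_eq_card_support_cycleOf {σ : Perm α} {x : α} (hx : x ∈ σ.support) :
    minimalPeriod σ x = (σ.cycleOf x).support.card := by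
  have hx' : x ∈ (σ.cycleOf x).support := mem_support_cycleOf_iff.2 ⟨SameCycle.refl _ _, hx⟩
  have hiff (m : ℕ) : IsPeriodicPt σ m x ↔ (σ.cycleOf x).support.card ∣ m := by
    rw [IsPeriodicPt, IsFixedPt, iterate_eq_pow]
    exact (σ.isCycleOn_support_cycleOf x).pow_apply_eq hx'
  exact Nat.dvd_antisymm (isPeriodicPt_iff_minimalPeriod_dvd.1 ((hiff _).2 dvd_rfl))
    ((hiff _).1 (isPeriodicPt_minimalPeriod σ x))

theorem mem_cycleType_iff_exists_minimalPeriod {σ : Perm α} {c : ℕ} :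
    c ∈ σ.cycleType ↔ ∃ x ∈ σ.support, minimalPeriod σ x = c := by
  simp only [cycleType_def, Multiset.mem_map, mem_val, comp_apply]
  constructor
  · rintro ⟨τ, hτ, rfl⟩
    obtain ⟨x, hx⟩ := (mem_cycleFactorsFinset_iff.1 hτ).1.nonempty_support
    refine ⟨x, mem_cycleFactorsFinset_support_le hτ hx, ?_⟩
    rw [minimalPeriod_eq_card_support_cycleOf (mem_cycleFactorsFinset_support_le hτ hx),
      cycle_is_cycleOf hx hτ]
  · rintro ⟨x, hx, rfl⟩
    exact ⟨σ.cycleOf x, cycleOf_mem_cycleFactorsFinset_iff.2 hx,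
      (minimalPeriod_eq_card_support_cycleOf hx).symm⟩

theorem forall_minimalPeriod_lt_iff {σ : Perm α} {k : ℕ} (hk : 2 ≤ k) :
    (∀ x, minimalPeriod σ x < k) ↔ ∀ c ∈ σ.cycleType, c < k := by
  simp only [mem_cycleType_iff_exists_minimalPeriod]
  refine ⟨fun h c ⟨x, _, hc⟩ => hc ▸ h x, fun h x => ?_⟩
  by_cases hx : x ∈ σ.support
  · exact h _ ⟨x, hx, rfl⟩
  · rw [minimalPeriod_eq_one_iff_isFixedPt.2 (notMem_support.1 hx)]
    omega

/-- In the class-size formula `n! / z_M`, adding a part `ℓ` to `M` multiplies `z_M` by `ℓ` times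
the new multiplicity of `ℓ`, while `n! = (n - ℓ)! · n.descFactorial ℓ`. -/
theorem mul_card_cycleType_cons_le {ℓ : ℕ} (hβ : Fintype.card β = Fintype.card α - ℓ)
    (M : Multiset ℕ) :
    ℓ * #{g : Perm α | g.cycleType = ℓ ::ₘ M} ≤
      (Fintype.card α).descFactorial ℓ * #{g : Perm β | g.cycleType = M} := by
  by_cases hM : (ℓ ::ₘ M).sum ≤ Fintype.card α ∧ ∀ a ∈ ℓ ::ₘ M, 2 ≤ a
  swap
  · simp [(card_of_cycleType_eq_zero_iff α).2 hM]
  obtain ⟨hsum, hparts⟩ := hM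
  rw [Multiset.sum_cons] at hsum
  have hM' : M.sum ≤ Fintype.card β ∧ ∀ a ∈ M, 2 ≤ a :=
    ⟨by omega, fun a ha => hparts a (Multiset.mem_cons_of_mem ha)⟩
  have hα := card_of_cycleType_mul_eq α (ℓ ::ₘ M)
  have hβ' := card_of_cycleType_mul_eq β M
  rw [if_pos ⟨by rw [Multiset.sum_cons]; omega, hparts⟩, Multiset.sum_cons,
    Multiset.prod_cons, ← Nat.factorial_mul_descFactorial (by omega : ℓ ≤ Fintype.card α)] at hα
  rw [if_pos hM', hβ, Nat.sub_sub] at hβ'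
  obtain ⟨q, hP⟩ := Multiset.prod_factorial_count_dvd_of_le (Multiset.le_cons_self M ℓ)
  rw [hP] at hα
  have hpos : 0 < (Fintype.card α - (ℓ + M.sum))! * M.prod *
      ∏ a ∈ M.toFinset, (M.count a)! := by
    have : 0 < M.prod := Multiset.prod_pos fun a ha => by linarith [hM'.2 a ha]
    positivity
  have hcancel : ℓ * #{g : Perm α | g.cycleType = ℓ ::ₘ M} * q =
      (Fintype.card α).descFactorial ℓ * #{g : Perm β | g.cycleType = M} := by
    refine Nat.eq_of_mul_eq_mul_right hpos ?_
    calc _ = (Fintype.card α - ℓ)! * (Fintype.card α).descFactorial ℓ := by rw [← hα]; ring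
      _ = _ := by rw [← hβ']; ring
  have hq : q ≠ 0 := by
    rintro rfl
    rw [mul_zero, mul_zero] at hα
    exact (Nat.mul_pos (factorial_pos _) (Nat.descFactorial_pos.2 (by omega))).ne hα
  calc _ ≤ ℓ * #{g : Perm α | g.cycleType = ℓ ::ₘ M} * q := Nat.le_mul_of_pos_right _ (by omega)
    _ = _ := hcancel

theorem sq_mul_card_sameCycleType_mem_le {ℓ : ℕ} (hβ : Fintype.card β = Fintype.card α - ℓ) :
    ℓ ^ 2 * #{p : Perm α × Perm α | p.1.cycleType = p.2.cycleType ∧ ℓ ∈ p.1.cycleType} ≤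
      (Fintype.card α).descFactorial ℓ ^ 2 *
        #{p : Perm β × Perm β | p.1.cycleType = p.2.cycleType} := by
  set s : Finset (Multiset ℕ) := {M ∈ univ.image (cycleType (α := α)) | ℓ ∈ M}
  have hs : #{p : Perm α × Perm α | p.1.cycleType = p.2.cycleType ∧ ℓ ∈ p.1.cycleType} =
      ∑ M ∈ s, #{g : Perm α | g.cycleType = M} ^ 2 := by
    rw [sum_sq_card_fiber]
    simp [s]
  have hcons {M} (hM : M ∈ s) : ℓ ::ₘ M.erase ℓ = M :=
    Multiset.cons_erase (mem_filter.1 hM).2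
  have herase : Set.InjOn (Multiset.erase · ℓ) s := fun M hM N hN h => by
    rw [← hcons hM, ← hcons hN]
    exact congrArg _ h
  calc ℓ ^ 2 * #{p : Perm α × Perm α | p.1.cycleType = p.2.cycleType ∧ ℓ ∈ p.1.cycleType}
      = ∑ M ∈ s, (ℓ * #{g : Perm α | g.cycleType = ℓ ::ₘ M.erase ℓ}) ^ 2 := by
        rw [hs, mul_sum]
        refine sum_congr rfl fun M hM => ?_
        rw [hcons hM, mul_pow]
    _ ≤ ∑ M ∈ s, ((Fintype.card α).descFactorial ℓ *
          #{g : Perm β | g.cycleType = M.erase ℓ}) ^ 2 :=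
        sum_le_sum fun M _ => Nat.pow_le_pow_left (mul_card_cycleType_cons_le hβ _) 2
    _ = (Fintype.card α).descFactorial ℓ ^ 2 *
          ∑ μ ∈ s.image (Multiset.erase · ℓ), #{g : Perm β | g.cycleType = μ} ^ 2 := by
        rw [sum_image herase, mul_sum]
        simp only [mul_pow]
    _ ≤ _ := by
        rw [sum_sq_card_fiber]
        exact Nat.mul_le_mul_left _ (card_le_card fun p hp => by
          simp only [mem_filter] at hp ⊢; exact ⟨hp.1, hp.2.1⟩)

theorem card_sameCycleType_le_short_add_long (k : ℕ) :
    #{p : Perm α × Perm α | p.1.cycleType = p.2.cycleType} ≤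
      #{g : Perm α | ∀ c ∈ g.cycleType, c < k} ^ 2 +
        ∑ ℓ ∈ Icc k (Fintype.card α),
          #{p : Perm α × Perm α | p.1.cycleType = p.2.cycleType ∧ ℓ ∈ p.1.cycleType} := by
  set short : Finset (Perm α) := {g | ∀ c ∈ g.cycleType, c < k}
  set conj : Finset (Perm α × Perm α) := {p | p.1.cycleType = p.2.cycleType}
  rw [← card_filter_add_card_filter_not (s := conj) fun p => p.1 ∈ short]
  gcongr
  · rw [sq, ← card_product]
    refine card_le_card fun p hp => ?_
    simp only [conj, short, mem_filter, mem_univ, true_and, mem_product] at hp ⊢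
    exact ⟨hp.2, hp.1 ▸ hp.2⟩
  · refine (card_le_card fun p hp => ?_).trans card_biUnion_le
    simp only [conj, short, mem_filter, mem_univ, true_and, not_forall, not_lt] at hp
    obtain ⟨hconj, c, hc, hkc⟩ := hp
    have hcn : c ≤ Fintype.card α := (le_card_support_of_mem_cycleType hc).trans (card_le_univ _)
    exact mem_biUnion.2 ⟨c, mem_Icc.2 ⟨hkc, hcn⟩, mem_filter.2 ⟨mem_univ _, hconj, hc⟩⟩

theorem kappa_eq :
    kappa (Perm α) = #{p : Perm α × Perm α | p.1.cycleType = p.2.cycleType} /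
      ((Fintype.card α)! : ℝ) ^ 2 := by
  simp only [kappa, isConj_iff_cycleType_eq, Nat.card_eq_fintype_card, Fintype.card_subtype,
    Fintype.card_perm]

end Equiv.Perm

theorem shortCycleProb_eq {k n : ℕ} (hk : 2 ≤ k) :
    shortCycleProb k n = #{σ : Perm (Fin n) | ∀ c ∈ σ.cycleType, c < k} / (n ! : ℝ) := by
  rw [shortCycleProb, Nat.card_congr (subtypeEquivRight fun σ =>
    Perm.forall_minimalPeriod_lt_iff hk), Nat.card_eq_fintype_card, Fintype.card_subtype]

theorem kappaS_eq (m : ℕ) :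
    kappaS m = #{p : Perm (Fin m) × Perm (Fin m) | p.1.cycleType = p.2.cycleType} /
      (m ! : ℝ) ^ 2 := by
  rw [kappaS, Perm.kappa_eq, Fintype.card_fin]

theorem card_sameCycleType_mem_div_le {n ℓ : ℕ} (hℓ : 0 < ℓ) (hℓn : ℓ ≤ n) :
    (#{p : Perm (Fin n) × Perm (Fin n) | p.1.cycleType = p.2.cycleType ∧ ℓ ∈ p.1.cycleType} : ℝ) /
      (n ! : ℝ) ^ 2 ≤ kappaS (n - ℓ) / ℓ ^ 2 := by
  have key := Perm.sq_mul_card_sameCycleType_mem_le (α := Fin n) (β := Fin (n - ℓ)) (ℓ := ℓ)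
    (by simp only [Fintype.card_fin])
  rw [Fintype.card_fin] at key
  rw [kappaS_eq, div_div, div_le_div_iff₀ (by positivity) (by positivity)]
  set L := #{p : Perm (Fin n) × Perm (Fin n) | p.1.cycleType = p.2.cycleType ∧ ℓ ∈ p.1.cycleType}
  set N := #{p : Perm (Fin (n - ℓ)) × Perm (Fin (n - ℓ)) | p.1.cycleType = p.2.cycleType}
  have hfac : ((n - ℓ) ! : ℝ) * n.descFactorial ℓ = n ! := by
    exact_mod_cast factorial_mul_descFactorial hℓn
  calc (L : ℝ) * ((n - ℓ) ! ^ 2 * ℓ ^ 2) = (ℓ ^ 2 * L : ℕ) * ((n - ℓ) ! : ℝ) ^ 2 := by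
        push_cast; ring
    _ ≤ (n.descFactorial ℓ ^ 2 * N : ℕ) * ((n - ℓ) ! : ℝ) ^ 2 := by gcongr
    _ = N * (n ! : ℝ) ^ 2 := by rw [← hfac]; push_cast; ring

theorem kappaS_upper_recurrence (n k : ℕ) (hk : 2 ≤ k) :
    kappaS n ≤ shortCycleProb k n ^ 2 +
      ∑ ℓ ∈ Finset.Icc k n, kappaS (n - ℓ) / (ℓ : ℝ) ^ 2 := by
  have hsplit := Perm.card_sameCycleType_le_short_add_long (α := Fin n) k
  rw [Fintype.card_fin] at hsplit
  rw [kappaS_eq, shortCycleProb_eq hk, div_pow]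
  calc _ ≤ ((#{σ : Perm (Fin n) | ∀ c ∈ σ.cycleType, c < k} : ℝ) ^ 2 +
        ∑ ℓ ∈ Icc k n, (#{p : Perm (Fin n) × Perm (Fin n) |
          p.1.cycleType = p.2.cycleType ∧ ℓ ∈ p.1.cycleType} : ℝ)) / (n ! : ℝ) ^ 2 := by
        gcongr
        exact_mod_cast hsplit
    _ ≤ _ := by
        rw [add_div, sum_div]
        refine add_le_add_right (sum_le_sum fun ℓ hℓ => ?_) _
        obtain ⟨hkℓ, hℓn⟩ := mem_Icc.1 hℓ
        exact card_sameCycleType_mem_div_le (by omega) hℓn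
end
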